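/- Assume ℰ is a Boolean algebra on E (a paving closed under complementation), L is a locally continuous frame, and ν is an L-valued maxitive measure on ℰ. Then the map ν_s defined on ℰ by ν_s(G) = ⋀_{H ∈ ℋ, H ⊆ G} ν(G \ H) is the greatest singular maxitive measure such that ν = ⌊ν⌋ ⊕ ν_s holds pointwise: ν_s is a maxitive measure, ν_s is singular, ν = ⌊ν⌋ ⊕ ν_s, and every singular maxitive measure τ on ℰ with ν = ⌊ν⌋ ⊕ τ satisfies τ ≤ ν_s. Consequently the residual part satisfies ⊥ν ≤ ν_s, so ⊥ν is singular. -/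
import Mathlib


open Set

variable {E L : Type*}

/-- A prepaving on `E`: a collection of subsets containing `∅` and closed under
(binary, hence finite) unions. -/
def IsPrepaving (ℰ : Set (Set E)) : Prop :=
  ∅ ∈ ℰ ∧ ∀ A ∈ ℰ, ∀ B ∈ ℰ, A ∪ B ∈ ℰ

/-- A paving on `E`: a prepaving covering `E` such that, for every `x`, the
collection `{G ∈ ℰ : x ∈ G}` is nonempty and filtered under inclusion. -/
def IsPaving (ℰ : Set (Set E)) : Prop :=
  IsPrepaving ℰ ∧ ∀ x : E, (∃ G ∈ ℰ, x ∈ G) ∧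
    ∀ G ∈ ℰ, x ∈ G → ∀ G' ∈ ℰ, x ∈ G' → ∃ H ∈ ℰ, x ∈ H ∧ H ⊆ G ∧ H ⊆ G'

/-- An ideal of the prepaving `ℰ`: a nonempty subset of `ℰ` closed under finite
unions and downward closed (within `ℰ`). -/
def IsIdealOf (ℰ 𝓘 : Set (Set E)) : Prop :=
  𝓘.Nonempty ∧ 𝓘 ⊆ ℰ ∧ (∀ A ∈ 𝓘, ∀ B ∈ 𝓘, A ∪ B ∈ 𝓘) ∧
    ∀ A ∈ ℰ, ∀ B ∈ 𝓘, A ⊆ B → A ∈ 𝓘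

/-- A filter of a poset: a nonempty, (downward) filtered, upward-closed subset. -/
def IsFilterSet [PartialOrder L] (F : Set L) : Prop :=
  F.Nonempty ∧ (∀ x ∈ F, ∀ y ∈ F, ∃ z ∈ F, z ≤ x ∧ z ≤ y) ∧
    ∀ x ∈ F, ∀ y : L, x ≤ y → y ∈ F

/-- `y` is way-above `x`: for every filter `F` possessing an infimum `a`,
`a ≤ x` implies `y ∈ F`. -/
def WayAbove [PartialOrder L] (y x : L) : Prop :=
  ∀ F : Set L, IsFilterSet F → ∀ a : L, IsGLB F a → a ≤ x → y ∈ F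

/-- A continuous poset: for every `x`, `↟x = {y : y ≫ x}` is a filter with
infimum `x`. -/
def ContinuousPoset (L : Type*) [PartialOrder L] : Prop :=
  ∀ x : L, IsFilterSet {y : L | WayAbove y x} ∧ IsGLB {y : L | WayAbove y x} x

/-- A domain: a continuous poset in which every filter has an infimum. -/
def DomainPoset (L : Type*) [PartialOrder L] : Prop :=
  ContinuousPoset L ∧ ∀ F : Set L, IsFilterSet F → ∃ a : L, IsGLB F a

/-- A locally complete poset: every upper-bounded subset has a supremum. -/
def LocallyComplete (L : Type*) [PartialOrder L] : Prop :=
  ∀ S : Set L, BddAbove S → ∃ a : L, IsLUB S a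

/-- A maxitive measure on `ℰ`: `ν ∅ = 0`, and for every finite family of
elements of `ℰ` whose union lies in `ℰ`, the supremum of the values exists and
equals the value of the union. -/
def IsMaxitive [PartialOrder L] [OrderBot L] (ℰ : Set (Set E)) (ν : Set E → L) : Prop :=
  ν ∅ = ⊥ ∧ ∀ S : Finset (Set E), (∀ G ∈ S, G ∈ ℰ) → ⋃₀ (S : Set (Set E)) ∈ ℰ →
    IsLUB (ν '' (S : Set (Set E))) (ν (⋃₀ (S : Set (Set E))))

/-- A completely maxitive measure on `ℰ`: as above, but for arbitrary families. -/
def IsCompletelyMaxitive [PartialOrder L] [OrderBot L] (ℰ : Set (Set E)) (ν : Set E → L) : Prop :=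
  ν ∅ = ⊥ ∧ ∀ 𝒢 : Set (Set E), 𝒢 ⊆ ℰ → ⋃₀ 𝒢 ∈ ℰ →
    IsLUB (ν '' 𝒢) (ν (⋃₀ 𝒢))

open Classical in
/-- The infimum of `S` when it exists, `⊥` otherwise. -/
noncomputable def pInf [PartialOrder L] [OrderBot L] (S : Set L) : L :=
  if h : ∃ a : L, IsGLB S a then h.choose else ⊥

open Classical in
/-- The supremum of `S` when it exists, `⊥` otherwise. -/
noncomputable def pSup [PartialOrder L] [OrderBot L] (S : Set L) : L :=
  if h : ∃ a : L, IsLUB S a then h.choose else ⊥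

/-- `ℰ*`: the collection of subsets `A` of `E` such that `{G ∈ ℰ : A ⊆ G}` is
nonempty and filtered under inclusion. -/
def EStar (ℰ : Set (Set E)) : Set (Set E) :=
  {A | (∃ G ∈ ℰ, A ⊆ G) ∧
    ∀ G ∈ ℰ, A ⊆ G → ∀ G' ∈ ℰ, A ⊆ G' → ∃ H ∈ ℰ, A ⊆ H ∧ H ⊆ G ∧ H ⊆ G'}

/-- The extension `ν*` of `ν`: `ν*(A) = ⋀ {ν G : G ∈ ℰ, A ⊆ G}`. -/
noncomputable def nuStar [PartialOrder L] [OrderBot L] (ℰ : Set (Set E))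
    (ν : Set E → L) (A : Set E) : L :=
  pInf (ν '' {G ∈ ℰ | A ⊆ G})

/-- `𝒦`: the compact subsets of `E` for the topology generated by `ℰ`. -/
def Kpt (ℰ : Set (Set E)) : Set (Set E) :=
  {K | @IsCompact E (TopologicalSpace.generateFrom ℰ) K}

/-- `ℱ = {F ⊆ E : F ∈ ℰ* and Fᶜ ∈ ℰ}`. -/
def Fcl (ℰ : Set (Set E)) : Set (Set E) :=
  {F | F ∈ EStar ℰ ∧ Fᶜ ∈ ℰ}

/-- `ℋ = 𝒦 ∩ ℱ`. -/
def Hcf (ℰ : Set (Set E)) : Set (Set E) := Kpt ℰ ∩ Fcl ℰ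

/-- The regular part `⌊ν⌋(G) = ⊕ {ν*(K) : K ∈ 𝒦, K ⊆ G}`. -/
noncomputable def regPart [PartialOrder L] [OrderBot L] (ℰ : Set (Set E))
    (ν : Set E → L) (G : Set E) : L :=
  pSup (nuStar ℰ ν '' {K ∈ Kpt ℰ | K ⊆ G})

/-- `r` is the residual part of `ν`: the smallest maxitive measure such that
`ν = ⌊ν⌋ ⊕ r` on `ℰ`. -/
def IsResidualPart [Lattice L] [OrderBot L] (ℰ : Set (Set E)) (ν r : Set E → L) : Prop :=
  IsMaxitive ℰ r ∧ (∀ G ∈ ℰ, ν G = regPart ℰ ν G ⊔ r G) ∧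
    ∀ τ : Set E → L, IsMaxitive ℰ τ → (∀ G ∈ ℰ, ν G = regPart ℰ ν G ⊔ τ G) →
      ∀ G ∈ ℰ, r G ≤ τ G
section AuxHelpers

theorem pInf_eq_of_isGLB [PartialOrder L] [OrderBot L] {S : Set L} {a : L}
    (h : IsGLB S a) : pInf S = a := by
  have he : ∃ b : L, IsGLB S b := ⟨a, h⟩
  rw [pInf, dif_pos he]
  exact he.choose_spec.unique h

theorem pSup_eq_of_isLUB [PartialOrder L] [OrderBot L] {S : Set L} {a : L}
    (h : IsLUB S a) : pSup S = a := by
  have he : ∃ b : L, IsLUB S b := ⟨a, h⟩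
  rw [pSup, dif_pos he]
  exact he.choose_spec.unique h

theorem locallyComplete_isGLB [PartialOrder L] (hlc : LocallyComplete L) {S : Set L}
    (hS : S.Nonempty) : ∃ a : L, IsGLB S a := by
  obtain ⟨s, hs⟩ := hS
  obtain ⟨a, ha⟩ := hlc (lowerBounds S) ⟨s, fun b hb => hb hs⟩
  exact ⟨a, fun t ht => ha.2 fun b hb => hb ht, fun b hb => ha.1 hb⟩

theorem wayAbove_ge [PartialOrder L] {y x : L} (h : WayAbove y x) : x ≤ y := by
  have hF : IsFilterSet (Set.Ici x) :=
    ⟨⟨x, le_rfl⟩, fun a ha b hb => ⟨x, le_rfl, ha, hb⟩, fun a ha b hab => le_trans ha hab⟩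
  exact h (Set.Ici x) hF x isGLB_Ici le_rfl

theorem wayAbove_mono [PartialOrder L] {y x x' : L} (h : WayAbove y x) (hx : x' ≤ x) :
    WayAbove y x' :=
  fun F hF a ha hax => h F hF a ha (hax.trans hx)

theorem filtered_glb_wayAbove [PartialOrder L] {D : Set L} (hne : D.Nonempty)
    (hfil : ∀ x ∈ D, ∀ y ∈ D, ∃ z ∈ D, z ≤ x ∧ z ≤ y)
    {a y : L} (ha : IsGLB D a) (hy : WayAbove y a) : ∃ d ∈ D, d ≤ y := by
  set F : Set L := {z | ∃ d ∈ D, d ≤ z} with hFdef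
  have hDF : D ⊆ F := fun d hd => ⟨d, hd, le_rfl⟩
  have hF : IsFilterSet F := by
    refine ⟨hne.mono hDF, ?_, ?_⟩
    · rintro x ⟨dx, hdx, hdx'⟩ y ⟨dy, hdy, hdy'⟩
      obtain ⟨z, hz, hz1, hz2⟩ := hfil dx hdx dy hdy
      exact ⟨z, hDF hz, hz1.trans hdx', hz2.trans hdy'⟩
    · rintro x ⟨d, hd, hd'⟩ z hz
      exact ⟨d, hd, hd'.trans hz⟩
  have hglb : IsGLB F a := by
    constructor
    · rintro z ⟨d, hd, hd'⟩
      exact (ha.1 hd).trans hd'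
    · intro b hb
      exact ha.2 fun d hd => hb (hDF hd)
  exact hy F hF a hglb le_rfl

theorem maxitive_mono' [Lattice L] [OrderBot L] {ℰ : Set (Set E)} {ν : Set E → L}
    (hν : IsMaxitive ℰ ν) {A B : Set E} (hA : A ∈ ℰ) (hB : B ∈ ℰ) (hAB : A ⊆ B) :
    ν A ≤ ν B := by
  classical
  have hcoe : (({A, B} : Finset (Set E)) : Set (Set E)) = {A, B} := by simp
  have hU : ⋃₀ (({A, B} : Finset (Set E)) : Set (Set E)) = B := by
    rw [hcoe, Set.sUnion_pair, union_eq_right.mpr hAB]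
  have h := hν.2 {A, B}
    (by
      intro G hG
      simp only [Finset.mem_insert, Finset.mem_singleton] at hG
      rcases hG with rfl | rfl
      exacts [hA, hB])
    (by rw [hU]; exact hB)
  rw [hU] at h
  exact h.1 ⟨A, by rw [hcoe]; exact mem_insert _ _, rfl⟩

theorem maxitive_union' [Lattice L] [OrderBot L] {ℰ : Set (Set E)} {ν : Set E → L}
    (hν : IsMaxitive ℰ ν) {A B : Set E} (hA : A ∈ ℰ) (hB : B ∈ ℰ) (hU : A ∪ B ∈ ℰ) :
    ν (A ∪ B) = ν A ⊔ ν B := by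
  classical
  have hcoe : (({A, B} : Finset (Set E)) : Set (Set E)) = {A, B} := by simp
  have hsU : ⋃₀ (({A, B} : Finset (Set E)) : Set (Set E)) = A ∪ B := by
    rw [hcoe, Set.sUnion_pair]
  have h := hν.2 {A, B}
    (by
      intro G hG
      simp only [Finset.mem_insert, Finset.mem_singleton] at hG
      rcases hG with rfl | rfl
      exacts [hA, hB])
    (by rw [hsU]; exact hU)
  rw [hsU, hcoe, Set.image_pair] at h
  exact h.unique isLUB_pair

end AuxHelpers

/-- on a Boolean algebra, `ν_s(G) = ⋀ {ν(G \ H) : H ∈ ℋ, H ⊆ G}`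
is the greatest singular maxitive measure with `ν = ⌊ν⌋ ⊕ ν_s`; consequently
the residual part `⊥ν` is below `ν_s`, hence singular. -/
theorem exists_greatest_singular_part [DistribLattice L] [OrderBot L]
    (hc : ContinuousPoset L) (hlc : LocallyComplete L)
    (ℰ : Set (Set E)) (hpav : IsPaving ℰ) (hbool : ∀ G ∈ ℰ, Gᶜ ∈ ℰ)
    (ν : Set E → L) (hν : IsMaxitive ℰ ν) :
    ∃ νs : Set E → L,
      (∀ G ∈ ℰ, IsGLB ((fun H : Set E => ν (G \ H)) '' {H ∈ Hcf ℰ | H ⊆ G}) (νs G)) ∧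
      IsMaxitive ℰ νs ∧
      (∀ H ∈ Hcf ℰ, nuStar ℰ νs H = ⊥) ∧
      (∀ G ∈ ℰ, ν G = regPart ℰ ν G ⊔ νs G) ∧
      (∀ τ : Set E → L, IsMaxitive ℰ τ → (∀ H ∈ Hcf ℰ, nuStar ℰ τ H = ⊥) →
        (∀ G ∈ ℰ, ν G = regPart ℰ ν G ⊔ τ G) → ∀ G ∈ ℰ, τ G ≤ νs G) ∧
      ∀ r : Set E → L, IsResidualPart ℰ ν r →
        (∀ G ∈ ℰ, r G ≤ νs G) ∧ ∀ H ∈ Hcf ℰ, nuStar ℰ r H = ⊥ := by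
  classical
  -- basic facts about ℰ
  have hE0 : ∅ ∈ ℰ := hpav.1.1
  have hEun : ∀ A ∈ ℰ, ∀ B ∈ ℰ, A ∪ B ∈ ℰ := hpav.1.2
  have hEuniv : (univ : Set E) ∈ ℰ := by
    have := hbool ∅ hE0; rwa [compl_empty] at this
  have hEinter : ∀ A ∈ ℰ, ∀ B ∈ ℰ, A ∩ B ∈ ℰ := by
    intro A hA B hB
    have := hbool _ (hEun _ (hbool A hA) _ (hbool B hB))
    rwa [compl_union, compl_compl, compl_compl] at this
  have hEdiff : ∀ A ∈ ℰ, ∀ B ∈ ℰ, A \ B ∈ ℰ := by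
    intro A hA B hB
    rw [diff_eq]
    exact hEinter A hA _ (hbool B hB)
  have hEStar : ∀ A ∈ ℰ, A ∈ EStar ℰ := fun A hA =>
    ⟨⟨A, hA, subset_rfl⟩, fun G hG hAG G' hG' hAG' => ⟨A, hA, subset_rfl, hAG, hAG'⟩⟩
  -- basic facts about ℋ
  have hHsub : Hcf ℰ ⊆ ℰ := by
    intro H hH
    have := hbool _ hH.2.2
    rwa [compl_compl] at this
  have hH0 : ∅ ∈ Hcf ℰ := by
    refine ⟨?_, hEStar ∅ hE0, by rw [compl_empty]; exact hEuniv⟩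
    letI := TopologicalSpace.generateFrom ℰ
    exact isCompact_empty
  have hHunion : ∀ H₁ ∈ Hcf ℰ, ∀ H₂ ∈ Hcf ℰ, H₁ ∪ H₂ ∈ Hcf ℰ := by
    intro H₁ h₁ H₂ h₂
    refine ⟨?_, hEStar _ (hEun _ (hHsub h₁) _ (hHsub h₂)), ?_⟩
    · letI := TopologicalSpace.generateFrom ℰ
      exact h₁.1.union h₂.1
    · rw [compl_union]
      exact hEinter _ h₁.2.2 _ h₂.2.2
  have hHinterE : ∀ H ∈ Hcf ℰ, ∀ G ∈ ℰ, H ∩ G ∈ Hcf ℰ := by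
    intro H hH G hG
    have hmem : H ∩ G ∈ ℰ := hEinter _ (hHsub hH) _ hG
    have hcompl : (H ∩ G)ᶜ ∈ ℰ := by
      rw [compl_inter]
      exact hEun _ hH.2.2 _ (hbool G hG)
    refine ⟨?_, hEStar _ hmem, hcompl⟩
    letI := TopologicalSpace.generateFrom ℰ
    have hopen : IsOpen (H ∩ G)ᶜ := TopologicalSpace.GenerateOpen.basic _ hcompl
    have hclosed : IsClosed (H ∩ G) := isOpen_compl_iff.mp hopen
    exact hH.1.of_isClosed_subset hclosed inter_subset_left
  -- the candidate measure
  set 𝒟 : Set E → Set L :=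
    fun G => (fun H : Set E => ν (G \ H)) '' {H ∈ Hcf ℰ | H ⊆ G} with h𝒟
  set νs : Set E → L := fun G => pInf (𝒟 G) with hνsdef
  have hmono : ∀ A ∈ ℰ, ∀ B ∈ ℰ, A ⊆ B → ν A ≤ ν B :=
    fun A hA B hB h => maxitive_mono' hν hA hB h
  have h𝒟ne : ∀ G : Set E, (𝒟 G).Nonempty :=
    fun G => ⟨ν (G \ ∅), ⟨∅, ⟨hH0, empty_subset G⟩, rfl⟩⟩
  have hGLB : ∀ G : Set E, IsGLB (𝒟 G) (νs G) := by
    intro G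
    obtain ⟨a, ha⟩ := locallyComplete_isGLB hlc (h𝒟ne G)
    have : νs G = a := pInf_eq_of_isGLB ha
    rw [this]; exact ha
  have h𝒟fil : ∀ G ∈ ℰ, ∀ x ∈ 𝒟 G, ∀ y ∈ 𝒟 G, ∃ z ∈ 𝒟 G, z ≤ x ∧ z ≤ y := by
    rintro G hG _ ⟨H₁, ⟨hH₁, hH₁G⟩, rfl⟩ _ ⟨H₂, ⟨hH₂, hH₂G⟩, rfl⟩
    refine ⟨ν (G \ (H₁ ∪ H₂)), ⟨H₁ ∪ H₂, ⟨hHunion _ hH₁ _ hH₂, union_subset hH₁G hH₂G⟩, rfl⟩,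
      ?_, ?_⟩
    · exact hmono _ (hEdiff _ hG _ (hHsub (hHunion _ hH₁ _ hH₂))) _ (hEdiff _ hG _ (hHsub hH₁))
        (diff_subset_diff_right subset_union_left)
    · exact hmono _ (hEdiff _ hG _ (hHsub (hHunion _ hH₁ _ hH₂))) _ (hEdiff _ hG _ (hHsub hH₂))
        (diff_subset_diff_right subset_union_right)
  have hνs_le : ∀ G, ∀ H ∈ Hcf ℰ, H ⊆ G → νs G ≤ ν (G \ H) :=
    fun G H hH hHG => (hGLB G).1 ⟨H, ⟨hH, hHG⟩, rfl⟩
  have hνs_mono : ∀ G ∈ ℰ, ∀ G' ∈ ℰ, G ⊆ G' → νs G ≤ νs G' := by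
    intro G hG G' hG' hGG'
    refine (hGLB G').2 ?_
    rintro _ ⟨H, ⟨hH, hHG'⟩, rfl⟩
    have h1 : νs G ≤ ν (G \ (H ∩ G)) := hνs_le G (H ∩ G) (hHinterE _ hH _ hG) inter_subset_right
    rw [diff_inter_self_eq_diff] at h1
    exact h1.trans (hmono _ (hEdiff _ hG _ (hHsub hH)) _ (hEdiff _ hG' _ (hHsub hH))
      (diff_subset_diff_left hGG'))
  -- νs ∅ = ⊥ and νs H = ⊥ for H ∈ ℋ
  have hνsH : ∀ H ∈ Hcf ℰ, νs H = ⊥ := by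
    intro H hH
    refine pInf_eq_of_isGLB ⟨fun d _ => bot_le, fun b hb => ?_⟩
    have : b ≤ ν (H \ H) := hb ⟨H, ⟨hH, subset_rfl⟩, rfl⟩
    rwa [diff_self, hν.1] at this
  -- maxitivity of νs
  have hmaxνs : IsMaxitive ℰ νs := by
    constructor
    · exact hνsH ∅ hH0
    · intro S hS hUS
      constructor
      · rintro _ ⟨G, hG, rfl⟩
        exact hνs_mono G (hS G hG) _ hUS (subset_sUnion_of_mem hG)
      · intro b hb
        refine (hc b).2.2 ?_
        intro y hy
        have key : ∀ G : Set E, ∃ H, H ∈ Hcf ℰ ∧ H ⊆ G ∧ (G ∈ S → ν (G \ H) ≤ y) := by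
          intro G
          by_cases hG : G ∈ S
          · have hyb : WayAbove y (νs G) :=
              wayAbove_mono hy (hb (mem_image_of_mem _ (Finset.mem_coe.mpr hG)))
            obtain ⟨d, ⟨H, ⟨hH, hHG⟩, rfl⟩, hdy⟩ :=
              filtered_glb_wayAbove (h𝒟ne G) (h𝒟fil G (hS G hG)) (hGLB G) hyb
            exact ⟨H, hH, hHG, fun _ => hdy⟩
          · exact ⟨∅, hH0, empty_subset G, fun h => absurd h hG⟩
        choose f hf1 hf2 hf3 using key
        set H : Set E := S.sup f with hHdef
        have hHmem : H ∈ Hcf ℰ := by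
          refine Finset.sup_induction hH0 ?_ fun G _ => hf1 G
          intro a ha b hb'
          exact hHunion a ha b hb'
        have hHE : H ∈ ℰ := hHsub hHmem
        have hHU : H ⊆ ⋃₀ (S : Set (Set E)) := by
          refine Finset.sup_le fun G hG => ?_
          exact (hf2 G).trans (subset_sUnion_of_mem (Finset.mem_coe.mpr hG))
        have hUeq : ⋃₀ ((S.image fun G => G \ H : Finset (Set E)) : Set (Set E)) =
            (⋃₀ (S : Set (Set E))) \ H := by
          rw [Finset.coe_image, sUnion_image]
          ext x
          simp only [mem_iUnion, mem_diff, mem_sUnion, Finset.mem_coe, exists_prop]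
          tauto
        have hmax := hν.2 (S.image fun G => G \ H)
          (by
            intro G' hG'
            rw [Finset.mem_image] at hG'
            obtain ⟨G, hG, rfl⟩ := hG'
            exact hEdiff _ (hS G hG) _ hHE)
          (by rw [hUeq]; exact hEdiff _ hUS _ hHE)
        rw [hUeq] at hmax
        have hub : y ∈ upperBounds (ν '' ((S.image fun G => G \ H : Finset (Set E)) :
            Set (Set E))) := by
          rintro _ ⟨G', hG', rfl⟩
          rw [Finset.coe_image] at hG'
          obtain ⟨G, hG, rfl⟩ := hG'
          have hGS : G ∈ S := Finset.mem_coe.mp hG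
          have h1 : ν (G \ H) ≤ ν (G \ f G) :=
            hmono _ (hEdiff _ (hS G hGS) _ hHE) _ (hEdiff _ (hS G hGS) _ (hHsub (hf1 G)))
              (diff_subset_diff_right (Finset.le_sup hGS))
          exact h1.trans (hf3 G hGS)
        have hνU : ν ((⋃₀ (S : Set (Set E))) \ H) ≤ y := hmax.2 hub
        exact (hνs_le _ H hHmem hHU).trans hνU
  -- singularity of νs
  have hsingνs : ∀ H ∈ Hcf ℰ, nuStar ℰ νs H = ⊥ := by
    intro H hH
    have hHE : H ∈ ℰ := hHsub hH
    refine pInf_eq_of_isGLB ⟨fun d _ => bot_le, fun b hb => ?_⟩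
    have : b ≤ νs H := hb ⟨H, ⟨hHE, subset_rfl⟩, rfl⟩
    rwa [hνsH H hH] at this
  -- the decomposition ν = ⌊ν⌋ ⊔ νs
  have hdec : ∀ G ∈ ℰ, ν G = regPart ℰ ν G ⊔ νs G := by
    intro G hG
    have hub : ν G ∈ upperBounds (nuStar ℰ ν '' {K ∈ Kpt ℰ | K ⊆ G}) := by
      rintro _ ⟨K, ⟨hK, hKG⟩, rfl⟩
      obtain ⟨a, ha⟩ := locallyComplete_isGLB hlc
        (⟨ν G, ⟨G, ⟨hG, hKG⟩, rfl⟩⟩ : (ν '' {G' ∈ ℰ | K ⊆ G'}).Nonempty)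
      rw [nuStar, pInf_eq_of_isGLB ha]
      exact ha.1 ⟨G, ⟨hG, hKG⟩, rfl⟩
    obtain ⟨s, hs⟩ := hlc _ ⟨ν G, hub⟩
    have hreg : regPart ℰ ν G = s := pSup_eq_of_isLUB hs
    have hreg_le : regPart ℰ ν G ≤ ν G := by rw [hreg]; exact hs.2 hub
    have hνH_le_reg : ∀ H ∈ Hcf ℰ, H ⊆ G → ν H ≤ regPart ℰ ν G := by
      intro H hH hHG
      have hHE : H ∈ ℰ := hHsub hH
      obtain ⟨a, ha⟩ := locallyComplete_isGLB hlc
        (⟨ν H, ⟨H, ⟨hHE, subset_rfl⟩, rfl⟩⟩ : (ν '' {G' ∈ ℰ | H ⊆ G'}).Nonempty)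
      have h1 : ν H ≤ nuStar ℰ ν H := by
        rw [nuStar, pInf_eq_of_isGLB ha]
        refine ha.2 ?_
        rintro _ ⟨G', ⟨hG', hHG'⟩, rfl⟩
        exact hmono _ hHE _ hG' hHG'
      have h2 : nuStar ℰ ν H ≤ regPart ℰ ν G := by
        rw [hreg]
        exact hs.1 ⟨H, ⟨hH.1, hHG⟩, rfl⟩
      exact h1.trans h2
    have hdec_pt : ∀ H ∈ Hcf ℰ, H ⊆ G → ν G = ν (G \ H) ⊔ ν H := by
      intro H hH hHG
      have hHE : H ∈ ℰ := hHsub hH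
      have heq : G \ H ∪ H = G := by
        rw [diff_union_self, union_eq_self_of_subset_right hHG]
      have := maxitive_union' hν (hEdiff _ hG _ hHE) hHE (by rw [heq]; exact hG)
      rwa [heq] at this
    have hle : ν G ≤ regPart ℰ ν G ⊔ νs G := by
      refine (hc (regPart ℰ ν G ⊔ νs G)).2.2 ?_
      intro y hy
      have hym : regPart ℰ ν G ⊔ νs G ≤ y := wayAbove_ge hy
      obtain ⟨d, ⟨H, ⟨hH, hHG⟩, rfl⟩, hdy⟩ :=
        filtered_glb_wayAbove (h𝒟ne G) (h𝒟fil G hG) (hGLB G) (wayAbove_mono hy le_sup_right)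
      have h1 : ν H ≤ y := (hνH_le_reg H hH hHG).trans (le_sup_left.trans hym)
      calc ν G = ν (G \ H) ⊔ ν H := hdec_pt H hH hHG
        _ ≤ y ⊔ y := sup_le_sup hdy h1
        _ = y := sup_idem y
    have hge : regPart ℰ ν G ⊔ νs G ≤ ν G := by
      refine sup_le hreg_le ?_
      have := hνs_le G ∅ hH0 (empty_subset G)
      rwa [diff_empty] at this
    exact le_antisymm hle hge
  -- maximality among singular measures
  have hmaxτ : ∀ τ : Set E → L, IsMaxitive ℰ τ → (∀ H ∈ Hcf ℰ, nuStar ℰ τ H = ⊥) →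
      (∀ G ∈ ℰ, ν G = regPart ℰ ν G ⊔ τ G) → ∀ G ∈ ℰ, τ G ≤ νs G := by
    intro τ hτ hτsing hτdec G hG
    refine (hGLB G).2 ?_
    rintro _ ⟨H, ⟨hH, hHG⟩, rfl⟩
    have hHE : H ∈ ℰ := hHsub hH
    have hτH : τ H = ⊥ := by
      obtain ⟨a, ha⟩ := locallyComplete_isGLB hlc
        (⟨τ H, ⟨H, ⟨hHE, subset_rfl⟩, rfl⟩⟩ : (τ '' {G' ∈ ℰ | H ⊆ G'}).Nonempty)
      have h0 := hτsing H hH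
      rw [nuStar, pInf_eq_of_isGLB ha] at h0
      have hle : τ H ≤ a := by
        refine ha.2 ?_
        rintro _ ⟨G', ⟨hG', hHG'⟩, rfl⟩
        exact maxitive_mono' hτ hHE hG' hHG'
      exact le_antisymm (h0 ▸ hle) bot_le
    have heq : G \ H ∪ H = G := by
      rw [diff_union_self, union_eq_self_of_subset_right hHG]
    have hτG : τ G = τ (G \ H) ⊔ τ H := by
      have := maxitive_union' hτ (hEdiff _ hG _ hHE) hHE (by rw [heq]; exact hG)
      rwa [heq] at this
    show τ G ≤ ν (G \ H)
    rw [hτG, hτH, sup_bot_eq]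
    have : ν (G \ H) = regPart ℰ ν (G \ H) ⊔ τ (G \ H) := hτdec _ (hEdiff _ hG _ hHE)
    rw [this]
    exact le_sup_right
  refine ⟨νs, fun G _ => hGLB G, hmaxνs, hsingνs, hdec, hmaxτ, ?_⟩
  -- residual part
  intro r hr
  have h1 : ∀ G ∈ ℰ, r G ≤ νs G := hr.2.2 νs hmaxνs hdec
  refine ⟨h1, ?_⟩
  intro H hH
  have hHE : H ∈ ℰ := hHsub hH
  have hrH : r H = ⊥ := le_antisymm (by rw [← hνsH H hH]; exact h1 H hHE) bot_le
  refine pInf_eq_of_isGLB ⟨fun d _ => bot_le, fun b hb => ?_⟩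
  have : b ≤ r H := hb ⟨H, ⟨hHE, subset_rfl⟩, rfl⟩
  rwa [hrH] at this
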